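/- arXiv:0710.1325 — 5 statements merged into one kernel-verified Lean document; each statement's English description precedes it below -/
import Mathlib

section
/- Let A = [[A11, A12],[A12†, A22]] be a Hermitian positive definite block matrix (with A22 positive definite). Then the Schur complement map A ↦ A11 − A12 A22⁻¹ A12† is concave on the set of such positive definite block matrices: for block matrices A, B (with positive definite lower-right blocks) and t ∈ [0,1], the Schur complement of tA + (1−t)B dominates (in the Loewner order) t times the Schur complement of A plus (1−t) times the Schur complement of B. -/
/-!
For `D` positive definite, `[[B D⁻¹ Bᴴ, B], [Bᴴ, D]]` is positive semidefinite, its Schur complement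
being zero. Write `X(t) = t X_A + (1 - t) X_B` for each block and `S` for the weighted sum of the two
Schur complements. Then `[[A₁₁(t) - S, A₁₂(t)], [A₁₂(t)ᴴ, A₂₂(t)]]` is the `t, 1 - t` combination of two
such matrices, hence positive semidefinite, and its Schur complement is exactly the difference to be
shown positive semidefinite.
-/

open Matrix
open scoped ComplexOrder

namespace Matrix

variable {m n K : Type*} [Field K] [PartialOrder K] [StarRing K] [StarOrderedRing K]

theorem PosDef.smul_add_smul [PosSMulStrictMono K K] {D₁ D₂ : Matrix n n K}
    (hD₁ : D₁.PosDef) (hD₂ : D₂.PosDef) {a b : K} (ha : 0 ≤ a) (hb : 0 ≤ b) (hab : 0 < a + b) :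
    (a • D₁ + b • D₂).PosDef := by
  rcases ha.lt_or_eq with ha | rfl
  · exact (hD₁.smul ha).add_posSemidef (hD₂.posSemidef.smul hb)
  · rw [zero_add] at hab
    rw [zero_smul, zero_add]
    exact hD₂.smul hab

variable [Fintype m] [Fintype n] [DecidableEq n]

theorem PosDef.posSemidef_fromBlocks_mul_inv_mul_conjTranspose (B : Matrix m n K)
    {D : Matrix n n K} (hD : D.PosDef) : (fromBlocks (B * D⁻¹ * Bᴴ) B Bᴴ D).PosSemidef := by
  have := hD.isUnit.invertible
  rw [hD.fromBlocks₂₂, sub_self]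
  exact .zero

theorem posSemidef_schur_smul_add_smul_sub {a b : K} (ha : 0 ≤ a) (hb : 0 ≤ b)
    (A₁ A₂ : Matrix m m K) (B₁ B₂ : Matrix m n K) {D₁ D₂ : Matrix n n K}
    (hD₁ : D₁.PosDef) (hD₂ : D₂.PosDef) (hD : (a • D₁ + b • D₂).PosDef) :
    ((a • A₁ + b • A₂) - (a • B₁ + b • B₂) * (a • D₁ + b • D₂)⁻¹ * (a • B₁ + b • B₂)ᴴ
      - (a • (A₁ - B₁ * D₁⁻¹ * B₁ᴴ) + b • (A₂ - B₂ * D₂⁻¹ * B₂ᴴ))).PosSemidef := by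
  have hblocks := ((hD₁.posSemidef_fromBlocks_mul_inv_mul_conjTranspose B₁).smul ha).add
    ((hD₂.posSemidef_fromBlocks_mul_inv_mul_conjTranspose B₂).smul hb)
  have := hD.isUnit.invertible
  have hB : (a • B₁ + b • B₂)ᴴ = a • B₁ᴴ + b • B₂ᴴ := by
    rw [conjTranspose_add, conjTranspose_smul, conjTranspose_smul,
      (IsSelfAdjoint.of_nonneg ha).star_eq, (IsSelfAdjoint.of_nonneg hb).star_eq]
  rw [fromBlocks_smul, fromBlocks_smul, fromBlocks_add, ← hB, hD.fromBlocks₂₂] at hblocks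
  have hupper : a • A₁ + b • A₂ - (a • (A₁ - B₁ * D₁⁻¹ * B₁ᴴ) + b • (A₂ - B₂ * D₂⁻¹ * B₂ᴴ)) =
      a • (B₁ * D₁⁻¹ * B₁ᴴ) + b • (B₂ * D₂⁻¹ * B₂ᴴ) := by
    simp only [smul_sub]
    abel
  rwa [sub_right_comm, hupper]

end Matrix

theorem stmt_3_general {m n : ℕ}
    (A11 B11 : Matrix (Fin m) (Fin m) ℂ) (A12 B12 : Matrix (Fin m) (Fin n) ℂ)
    (A22 B22 : Matrix (Fin n) (Fin n) ℂ)
    (hA22 : A22.PosDef) (hB22 : B22.PosDef)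
    (t : ℝ) (ht0 : 0 ≤ t) (ht1 : t ≤ 1) :
    (((((t : ℂ) • A11 + ((1 - t : ℝ) : ℂ) • B11)
        - ((t : ℂ) • A12 + ((1 - t : ℝ) : ℂ) • B12)
          * ((t : ℂ) • A22 + ((1 - t : ℝ) : ℂ) • B22)⁻¹
          * ((t : ℂ) • A12 + ((1 - t : ℝ) : ℂ) • B12)ᴴ))
      - ((t : ℂ) • (A11 - A12 * A22⁻¹ * A12ᴴ)
          + ((1 - t : ℝ) : ℂ) • (B11 - B12 * B22⁻¹ * B12ᴴ))).PosSemidef := by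
  have ha : (0 : ℂ) ≤ t := Complex.zero_le_real.mpr ht0
  have hb : (0 : ℂ) ≤ ((1 - t : ℝ) : ℂ) := Complex.zero_le_real.mpr (sub_nonneg.mpr ht1)
  have hab : (0 : ℂ) < t + ((1 - t : ℝ) : ℂ) := by norm_num
  exact posSemidef_schur_smul_add_smul_sub ha hb A11 B11 A12 B12 hA22 hB22
    (hA22.smul_add_smul hB22 ha hb hab)

/-- Concavity of the Schur complement: for Hermitian positive definite block matrices
`A = [[A11, A12],[A12ᴴ, A22]]` and `B = [[B11, B12],[B12ᴴ, B22]]` (with positive definite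
lower-right blocks) and `t ∈ [0,1]`, the Schur complement of `tA + (1−t)B` dominates, in
the Loewner order, `t` times the Schur complement of `A` plus `(1−t)` times the Schur
complement of `B`. -/
theorem stmt_3 {m n : ℕ}
    (A11 B11 : Matrix (Fin m) (Fin m) ℂ) (A12 B12 : Matrix (Fin m) (Fin n) ℂ)
    (A22 B22 : Matrix (Fin n) (Fin n) ℂ)
    (hA : (Matrix.fromBlocks A11 A12 A12ᴴ A22).PosDef)
    (hB : (Matrix.fromBlocks B11 B12 B12ᴴ B22).PosDef)
    (hA22 : A22.PosDef) (hB22 : B22.PosDef)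
    (t : ℝ) (ht0 : 0 ≤ t) (ht1 : t ≤ 1) :
    (((((t : ℂ) • A11 + ((1 - t : ℝ) : ℂ) • B11)
        - ((t : ℂ) • A12 + ((1 - t : ℝ) : ℂ) • B12)
          * ((t : ℂ) • A22 + ((1 - t : ℝ) : ℂ) • B22)⁻¹
          * ((t : ℂ) • A12 + ((1 - t : ℝ) : ℂ) • B12)ᴴ))
      - ((t : ℂ) • (A11 - A12 * A22⁻¹ * A12ᴴ)
          + ((1 - t : ℝ) : ℂ) • (B11 - B12 * B22⁻¹ * B12ᴴ))).PosSemidef :=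
  stmt_3_general A11 B11 A12 B12 A22 B22 hA22 hB22 t ht0 ht1
end

section
/- Fix complex channel matrices H_r (n_r × n_t) and H_e (n_e × n_t), and fix an n_r × n_e matrix Φ with σ_max(Φ) < 1. Define for positive semidefinite K the matrix Λ(K) = I + H_r K H_r† − (Φ + H_r K H_e†)(I + H_e K H_e†)⁻¹(Φ† + H_e K H_r†). Then K ↦ log det Λ(K) is concave on the set of positive semidefinite n_t × n_t matrices. -/
/-!
Write `G` for the stacked matrix `[H_r; H_e]`. Then `Λ(K)` is the Schur complement of the
bottom-right block of `M(K) = [[I, Φ], [Φᴴ, I]] + G K Gᴴ`; since `I - ΦᴴΦ ≻ 0` makes `M(0)`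
positive definite, every `Λ(K)` is positive definite.

The Schur complement `A - B D⁻¹ Bᴴ` is the Loewner minimum over `Z` of
`A - Z Bᴴ - B Zᴴ + Z D Zᴴ`, attained at `Z = B D⁻¹`, and this expression is affine in
`(A, B, D)`. So the Schur complement is jointly concave, and since the blocks of `M(K)` are affine
in `K`, `Λ` is Loewner-concave in `K`. It remains to compose with `log det`, which is concave and
monotone on positive definite matrices: writing `A = Pᴴ P`, both properties reduce to scalar
statements about the eigenvalues `μᵢ` of `P⁻ᴴ B P⁻¹`, via
`det (θ A + η B) = det A * ∏ (θ + η μᵢ)`.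
-/

open Matrix
open scoped ComplexOrder

namespace Matrix

open scoped MatrixOrder

variable {𝕜 : Type*} [RCLike 𝕜]

section LogDet

variable {n : Type*}

lemma convex_setOf_posSemidef : Convex ℝ {A : Matrix n n 𝕜 | A.PosSemidef} :=
  fun _ hA _ hB _ _ hθ hη _ => (hA.smul hθ).add (hB.smul hη)

lemma convex_setOf_posDef : Convex ℝ {A : Matrix n n 𝕜 | A.PosDef} := by
  intro A hA B hB θ η hθ hη hθη
  rcases hθ.eq_or_lt with rfl | hθ
  · simpa [show η = 1 by linarith] using hB
  · exact (PosDef.smul hA hθ).add_posSemidef (hB.posSemidef.smul hη)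

variable [Fintype n] [DecidableEq n]

lemma posDef_iff_posSemidef_and_det_ne_zero {A : Matrix n n 𝕜} :
    A.PosDef ↔ A.PosSemidef ∧ A.det ≠ 0 :=
  ⟨fun h => ⟨h.posSemidef, h.det_pos.ne'⟩, fun h => h.1.posDef_iff_det_ne_zero.mpr h.2⟩

lemma PosDef.re_det_pos {A : Matrix n n 𝕜} (hA : A.PosDef) : 0 < RCLike.re A.det :=
  (RCLike.pos_iff.mp hA.det_pos).1

lemma IsHermitian.det_cfc {A : Matrix n n 𝕜} (hA : A.IsHermitian) (f : ℝ → ℝ) :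
    (cfc f A).det = ∏ i, (f (hA.eigenvalues i) : 𝕜) := by
  rw [hA.cfc_eq, IsHermitian.cfc, Unitary.conjStarAlgAut_apply, det_mul_comm, ← Matrix.mul_assoc,
    Unitary.coe_star_mul_self, Matrix.one_mul, det_diagonal]
  rfl

lemma IsHermitian.det_smul_one_add_smul {C : Matrix n n 𝕜} (hC : C.IsHermitian) (θ η : ℝ) :
    (θ • (1 : Matrix n n 𝕜) + η • C).det = ((∏ i, (θ + η * hC.eigenvalues i) : ℝ) : 𝕜) := by
  have hcfc : cfc (fun x => θ + η * x) C = θ • (1 : Matrix n n 𝕜) + η • C := by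
    rw [cfc_add .., cfc_const .., cfc_const_mul .., cfc_id' .., Algebra.algebraMap_eq_smul_one]
  rw [← hcfc, hC.det_cfc]
  push_cast
  rfl

lemma PosDef.exists_re_det_smul_add_smul {A B : Matrix n n 𝕜} (hA : A.PosDef)
    (hB : B.PosSemidef) :
    ∃ μ : n → ℝ, (∀ i, 0 ≤ μ i) ∧ ∀ θ η : ℝ,
      RCLike.re (θ • A + η • B).det = RCLike.re A.det * ∏ i, (θ + η * μ i) := by
  obtain ⟨P, hP, rfl⟩ :=
    CStarAlgebra.isStrictlyPositive_iff_eq_star_mul_self.mp hA.isStrictlyPositive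
  obtain ⟨C, rfl⟩ : ∃ C, B = star P * C * P := by
    lift P to (Matrix n n 𝕜)ˣ using hP
    refine ⟨star (↑P⁻¹ : Matrix n n 𝕜) * B * (↑P⁻¹ : Matrix n n 𝕜), ?_⟩
    rw [← Matrix.mul_assoc, ← Matrix.mul_assoc, ← star_mul, Units.inv_mul, star_one,
      Matrix.one_mul, Matrix.mul_assoc, Units.inv_mul, Matrix.mul_one]
  have hC := (IsUnit.posSemidef_star_left_conjugate_iff hP).mp hB
  refine ⟨hC.1.eigenvalues, hC.eigenvalues_nonneg, fun θ η => ?_⟩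
  have hfactor : θ • (star P * P) + η • (star P * C * P) = star P * (θ • 1 + η • C) * P := by
    simp only [Matrix.mul_add, Matrix.add_mul, Matrix.mul_smul, Matrix.smul_mul,
      Matrix.mul_one]
  rw [hfactor, det_mul, det_mul, hC.1.det_smul_one_add_smul, mul_right_comm, ← det_mul,
    RCLike.re_mul_ofReal]

lemma PosDef.re_det_le_re_det {A B : Matrix n n 𝕜} (hA : A.PosDef) (hAB : A ≤ B) :
    RCLike.re A.det ≤ RCLike.re B.det := by
  obtain ⟨μ, hμ, hdet⟩ := hA.exists_re_det_smul_add_smul hAB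
  have hB : RCLike.re B.det = RCLike.re A.det * ∏ i, (1 + 1 * μ i) := by
    simpa using hdet 1 1
  rw [hB]
  exact le_mul_of_one_le_right hA.re_det_pos.le
    (Finset.one_le_prod fun i _ => by linarith [hμ i])

lemma concaveOn_log_re_det :
    ConcaveOn ℝ {A : Matrix n n 𝕜 | A.PosDef} (fun A => Real.log (RCLike.re A.det)) := by
  refine ⟨convex_setOf_posDef, fun A hA B hB θ η hθ hη hθη => ?_⟩
  obtain ⟨μ, hμ, hdet⟩ := PosDef.exists_re_det_smul_add_smul hA hB.posSemidef
  have hdetB : RCLike.re B.det = RCLike.re A.det * ∏ i, μ i := by simpa using hdet 0 1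
  have hμ_pos : ∀ i, 0 < μ i := fun i => (hμ i).lt_of_ne' <|
    Finset.prod_ne_zero_iff.mp (right_ne_zero_of_mul (hdetB ▸ hB.re_det_pos.ne')) i (by simp)
  have hcomb_pos : ∀ i, 0 < θ + η * μ i := fun i => by
    rcases hη.eq_or_lt with rfl | hη <;> nlinarith [hμ_pos i]
  have hlog : ∀ i, η * Real.log (μ i) ≤ Real.log (θ + η * μ i) := fun i => by
    simpa using strictConcaveOn_log_Ioi.concaveOn.2 (Set.mem_Ioi.mpr one_pos)
      (Set.mem_Ioi.mpr (hμ_pos i)) hθ hη hθη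
  simp only [smul_eq_mul, hdetB, hdet θ η]
  rw [Real.log_mul hA.re_det_pos.ne' (Finset.prod_ne_zero_iff.mpr fun i _ => (hμ_pos i).ne'),
    Real.log_mul hA.re_det_pos.ne' (Finset.prod_ne_zero_iff.mpr fun i _ => (hcomb_pos i).ne'),
    Real.log_prod fun i _ => (hμ_pos i).ne', Real.log_prod fun i _ => (hcomb_pos i).ne']
  have hsum := Finset.sum_le_sum fun i (_ : i ∈ Finset.univ) => hlog i
  rw [← Finset.mul_sum] at hsum
  linear_combination hsum + Real.log (RCLike.re A.det) * hθη

end LogDet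

section Schur

variable {m p : Type*} [Fintype p] [DecidableEq p]

noncomputable def schurCompl (A : Matrix m m 𝕜) (B : Matrix m p 𝕜) (D : Matrix p p 𝕜) :
    Matrix m m 𝕜 :=
  A - B * D⁻¹ * Bᴴ

lemma posDef_fromBlocks₁₁_iff [Fintype m] [DecidableEq m] {A : Matrix m m 𝕜} (B : Matrix m p 𝕜)
    (D : Matrix p p 𝕜) (hA : A.PosDef) :
    (fromBlocks A B Bᴴ D).PosDef ↔ (D - Bᴴ * A⁻¹ * B).PosDef := by
  have := hA.isUnit.invertible
  rw [posDef_iff_posSemidef_and_det_ne_zero, posDef_iff_posSemidef_and_det_ne_zero,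
    PosDef.fromBlocks₁₁ B D hA, det_fromBlocks₁₁, invOf_eq_nonsing_inv,
    mul_ne_zero_iff, and_iff_right hA.det_pos.ne']

lemma posDef_fromBlocks₂₂_iff [Fintype m] [DecidableEq m] (A : Matrix m m 𝕜) (B : Matrix m p 𝕜)
    {D : Matrix p p 𝕜} (hD : D.PosDef) :
    (fromBlocks A B Bᴴ D).PosDef ↔ (schurCompl A B D).PosDef := by
  have := hD.isUnit.invertible
  rw [posDef_iff_posSemidef_and_det_ne_zero, posDef_iff_posSemidef_and_det_ne_zero,
    PosDef.fromBlocks₂₂ A B hD, det_fromBlocks₂₂, invOf_eq_nonsing_inv,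
    mul_ne_zero_iff, and_iff_right hD.det_pos.ne', schurCompl]

lemma sub_schurCompl_eq {D : Matrix p p 𝕜} (hD : D.PosDef) (A : Matrix m m 𝕜)
    (B Z : Matrix m p 𝕜) :
    A - Z * Bᴴ - B * Zᴴ + Z * D * Zᴴ - schurCompl A B D
      = (Z - B * D⁻¹) * D * (Z - B * D⁻¹)ᴴ := by
  have hdet : IsUnit D.det := hD.det_pos.ne'.isUnit
  simp only [schurCompl, conjTranspose_sub, conjTranspose_mul, hD.1.inv.eq, Matrix.sub_mul,
    Matrix.mul_sub, Matrix.mul_assoc, mul_nonsing_inv_cancel_left _ _ hdet,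
    nonsing_inv_mul_cancel_left _ _ hdet]
  abel

lemma schurCompl_le [Fintype m] {D : Matrix p p 𝕜} (hD : D.PosDef) (A : Matrix m m 𝕜)
    (B Z : Matrix m p 𝕜) :
    schurCompl A B D ≤ A - Z * Bᴴ - B * Zᴴ + Z * D * Zᴴ := by
  rw [le_iff, sub_schurCompl_eq hD]
  exact hD.posSemidef.mul_mul_conjTranspose_same _

lemma schurCompl_eq {D : Matrix p p 𝕜} (hD : D.PosDef) (A : Matrix m m 𝕜) (B : Matrix m p 𝕜) :
    schurCompl A B D
      = A - B * D⁻¹ * Bᴴ - B * (B * D⁻¹)ᴴ + B * D⁻¹ * D * (B * D⁻¹)ᴴ := by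
  rw [eq_comm, ← sub_eq_zero, sub_schurCompl_eq hD, sub_self, Matrix.zero_mul, Matrix.zero_mul]

lemma smul_schurCompl_add_smul_schurCompl_le [Fintype m] {A₁ A₂ : Matrix m m 𝕜}
    {B₁ B₂ : Matrix m p 𝕜} {D₁ D₂ : Matrix p p 𝕜} (hD₁ : D₁.PosDef) (hD₂ : D₂.PosDef) {θ η : ℝ}
    (hθ : 0 ≤ θ) (hη : 0 ≤ η) (hθη : θ + η = 1) :
    θ • schurCompl A₁ B₁ D₁ + η • schurCompl A₂ B₂ D₂
      ≤ schurCompl (θ • A₁ + η • A₂) (θ • B₁ + η • B₂) (θ • D₁ + η • D₂) := by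
  have hD : (θ • D₁ + η • D₂).PosDef := convex_setOf_posDef hD₁ hD₂ hθ hη hθη
  set Z := (θ • B₁ + η • B₂) * (θ • D₁ + η • D₂)⁻¹
  calc θ • schurCompl A₁ B₁ D₁ + η • schurCompl A₂ B₂ D₂
      ≤ θ • (A₁ - Z * B₁ᴴ - B₁ * Zᴴ + Z * D₁ * Zᴴ)
          + η • (A₂ - Z * B₂ᴴ - B₂ * Zᴴ + Z * D₂ * Zᴴ) :=
        add_le_add (smul_le_smul_of_nonneg_left (schurCompl_le hD₁ _ _ _) hθ)
          (smul_le_smul_of_nonneg_left (schurCompl_le hD₂ _ _ _) hη)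
    _ = (θ • A₁ + η • A₂) - Z * (θ • B₁ + η • B₂)ᴴ - (θ • B₁ + η • B₂) * Zᴴ
          + Z * (θ • D₁ + η • D₂) * Zᴴ := by
        simp only [conjTranspose_add, conjTranspose_smul, star_trivial, Matrix.mul_add,
          Matrix.add_mul, Matrix.mul_smul, Matrix.smul_mul]
        module
    _ = schurCompl (θ • A₁ + η • A₂) (θ • B₁ + η • B₂) (θ • D₁ + η • D₂) :=
        (schurCompl_eq hD _ _).symm

lemma smul_log_re_det_schurCompl_add_le [Fintype m] [DecidableEq m] {A₁ A₂ : Matrix m m 𝕜}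
    {B₁ B₂ : Matrix m p 𝕜} {D₁ D₂ : Matrix p p 𝕜} (hD₁ : D₁.PosDef) (hD₂ : D₂.PosDef)
    (hS₁ : (schurCompl A₁ B₁ D₁).PosDef) (hS₂ : (schurCompl A₂ B₂ D₂).PosDef) {θ η : ℝ}
    (hθ : 0 ≤ θ) (hη : 0 ≤ η) (hθη : θ + η = 1) :
    θ * Real.log (RCLike.re (schurCompl A₁ B₁ D₁).det)
        + η * Real.log (RCLike.re (schurCompl A₂ B₂ D₂).det)
      ≤ Real.log (RCLike.re
          (schurCompl (θ • A₁ + η • A₂) (θ • B₁ + η • B₂) (θ • D₁ + η • D₂)).det) := by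
  have hS := convex_setOf_posDef hS₁ hS₂ hθ hη hθη
  calc _ ≤ Real.log (RCLike.re (θ • schurCompl A₁ B₁ D₁ + η • schurCompl A₂ B₂ D₂).det) :=
        concaveOn_log_re_det.2 hS₁ hS₂ hθ hη hθη
    _ ≤ _ := Real.log_le_log hS.re_det_pos <| PosDef.re_det_le_re_det hS <|
        smul_schurCompl_add_smul_schurCompl_le hD₁ hD₂ hθ hη hθη

end Schur

section Channel

variable {r e t : Type*} [Fintype r] [Fintype e] [Fintype t] [DecidableEq r] [DecidableEq e]

lemma add_mul_smul_add_smul_mul {a b : Type*} (C : Matrix a b 𝕜) (X : Matrix a t 𝕜)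
    (K₁ K₂ : Matrix t t 𝕜) (Y : Matrix t b 𝕜) {θ η : ℝ} (hθη : θ + η = 1) :
    C + X * (θ • K₁ + η • K₂) * Y = θ • (C + X * K₁ * Y) + η • (C + X * K₂ * Y) := by
  simp only [Matrix.mul_add, Matrix.add_mul, Matrix.mul_smul, Matrix.smul_mul]
  linear_combination (norm := module) -(hθη • C)

lemma posDef_schurCompl_one_add (Hr : Matrix r t 𝕜) (He : Matrix e t 𝕜) {Φ : Matrix r e 𝕜}
    (hΦ : (1 - Φᴴ * Φ).PosDef) {K : Matrix t t 𝕜} (hK : K.PosSemidef) :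
    (schurCompl (1 + Hr * K * Hrᴴ) (Φ + Hr * K * Heᴴ) (1 + He * K * Heᴴ)).PosDef := by
  have hM₀ : (fromBlocks 1 Φ Φᴴ 1).PosDef :=
    (posDef_fromBlocks₁₁_iff Φ 1 PosDef.one).mpr (by simpa using hΦ)
  have hM : fromBlocks (1 + Hr * K * Hrᴴ) (Φ + Hr * K * Heᴴ) (Φ + Hr * K * Heᴴ)ᴴ
      (1 + He * K * Heᴴ) = fromBlocks 1 Φ Φᴴ 1 + fromRows Hr He * K * (fromRows Hr He)ᴴ := by
    rw [conjTranspose_fromRows_eq_fromCols_conjTranspose, fromRows_mul, fromRows_mul_fromCols,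
      fromBlocks_add, conjTranspose_add, conjTranspose_mul, conjTranspose_mul,
      conjTranspose_conjTranspose, hK.1.eq]
    simp only [Matrix.mul_assoc]
  refine (posDef_fromBlocks₂₂_iff _ _ (PosDef.one.add_posSemidef
    (hK.mul_mul_conjTranspose_same He))).mp ?_
  rw [hM]
  exact hM₀.add_posSemidef (hK.mul_mul_conjTranspose_same _)

end Channel

end Matrix

/-- With `σ_max(Φ) < 1` (i.e. `I - ΦᴴΦ ≻ 0`), the map
`K ↦ log det Λ(K)` where
`Λ(K) = I + H_r K H_rᴴ − (Φ + H_r K H_eᴴ)(I + H_e K H_eᴴ)⁻¹(Φᴴ + H_e K H_rᴴ)`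
is concave on the set of positive semidefinite matrices. -/
theorem stmt_4 {nr ne nt : ℕ}
    (Hr : Matrix (Fin nr) (Fin nt) ℂ) (He : Matrix (Fin ne) (Fin nt) ℂ)
    (Φ : Matrix (Fin nr) (Fin ne) ℂ)
    (hΦ : ((1 : Matrix (Fin ne) (Fin ne) ℂ) - Φᴴ * Φ).PosDef) :
    ConcaveOn ℝ {K : Matrix (Fin nt) (Fin nt) ℂ | K.PosSemidef}
      (fun K => Real.log
        (((1 : Matrix (Fin nr) (Fin nr) ℂ) + Hr * K * Hrᴴ
          - (Φ + Hr * K * Heᴴ) * ((1 : Matrix (Fin ne) (Fin ne) ℂ) + He * K * Heᴴ)⁻¹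
            * (Φᴴ + He * K * Hrᴴ)).det.re)) := by
  have hD (K : Matrix (Fin nt) (Fin nt) ℂ) (hK : K.PosSemidef) : (1 + He * K * Heᴴ).PosDef :=
    PosDef.one.add_posSemidef (hK.mul_mul_conjTranspose_same He)
  refine ConcaveOn.congr (f := fun K => Real.log (RCLike.re
      (schurCompl (1 + Hr * K * Hrᴴ) (Φ + Hr * K * Heᴴ) (1 + He * K * Heᴴ)).det))
    ⟨convex_setOf_posSemidef, fun K₁ hK₁ K₂ hK₂ θ η hθ hη hθη => ?_⟩ fun K hK => ?_
  · simp only [smul_eq_mul, add_mul_smul_add_smul_mul _ _ _ _ _ hθη]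
    exact smul_log_re_det_schurCompl_add_le (hD K₁ hK₁) (hD K₂ hK₂)
      (posDef_schurCompl_one_add Hr He hΦ hK₁) (posDef_schurCompl_one_add Hr He hΦ hK₂) hθ hη hθη
  · simp only [schurCompl, conjTranspose_add, conjTranspose_mul, conjTranspose_conjTranspose,
      hK.1.eq, Matrix.mul_assoc, RCLike.re_to_complex]
end

section
/- Let K̄ ⪰ 0, Φ with σ_max(Φ) ≤ 1, S a full-column-rank matrix with K̄ = S S†, and suppose Φ† H_r S = H_e S. Then log det(I + H_e K̄ H_e† − Φ†(I + H_r K̄ H_r†)Φ) = log det(I − Φ†Φ), provided I − Φ†Φ ≻ 0. -/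
open Matrix
open scoped ComplexOrder

/-- Under the degradedness condition `Φᴴ H_r S = H_e S` (with `K̄ = S Sᴴ`, `S` of full
column rank, `σ_max(Φ) ≤ 1` and `I − ΦᴴΦ ≻ 0`),
`log det(I + H_e K̄ H_eᴴ − Φᴴ(I + H_r K̄ H_rᴴ)Φ) = log det(I − ΦᴴΦ)`. -/
theorem stmt_10 {nr ne nt k : ℕ}
    (Hr : Matrix (Fin nr) (Fin nt) ℂ) (He : Matrix (Fin ne) (Fin nt) ℂ)
    (Φ : Matrix (Fin nr) (Fin ne) ℂ)
    (Kbar : Matrix (Fin nt) (Fin nt) ℂ) (hK : Kbar.PosSemidef)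
    (S : Matrix (Fin nt) (Fin k) ℂ)
    (hS : Function.Injective fun v : Fin k → ℂ => S.mulVec v)
    (hKS : Kbar = S * Sᴴ)
    (hΦ : ((1 : Matrix (Fin ne) (Fin ne) ℂ) - Φᴴ * Φ).PosSemidef)
    (hΦlt : ((1 : Matrix (Fin ne) (Fin ne) ℂ) - Φᴴ * Φ).PosDef)
    (hdeg : Φᴴ * Hr * S = He * S) :
    Real.log (((1 : Matrix (Fin ne) (Fin ne) ℂ) + He * Kbar * Heᴴ
        - Φᴴ * ((1 : Matrix (Fin nr) (Fin nr) ℂ) + Hr * Kbar * Hrᴴ) * Φ).det.re)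
      = Real.log (((1 : Matrix (Fin ne) (Fin ne) ℂ) - Φᴴ * Φ).det.re) := by
  have key : He * Kbar * Heᴴ = Φᴴ * (Hr * Kbar * Hrᴴ) * Φ := by
    subst hKS
    calc He * (S * Sᴴ) * Heᴴ = (He * S) * (He * S)ᴴ := by
          rw [conjTranspose_mul]; simp only [Matrix.mul_assoc]
      _ = (Φᴴ * Hr * S) * (Φᴴ * Hr * S)ᴴ := by rw [hdeg]
      _ = Φᴴ * (Hr * (S * Sᴴ) * Hrᴴ) * Φ := by
          simp only [conjTranspose_mul, conjTranspose_conjTranspose]; simp only [Matrix.mul_assoc]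
  have hmat : (1 : Matrix (Fin ne) (Fin ne) ℂ) + He * Kbar * Heᴴ
      - Φᴴ * ((1 : Matrix (Fin nr) (Fin nr) ℂ) + Hr * Kbar * Hrᴴ) * Φ
      = (1 : Matrix (Fin ne) (Fin ne) ℂ) - Φᴴ * Φ := by
    rw [key]
    simp only [Matrix.mul_add, Matrix.add_mul, Matrix.mul_one, Matrix.one_mul]
    abel
  rw [hmat]
end

section
/- If H_r† H_r ⪯ H_e† H_e (Loewner order), then for every positive semidefinite matrix K, det(I + H_r K H_r†) ≤ det(I + H_e K H_e†); consequently log det(I + H_r K H_r†) − log det(I + H_e K H_e†) ≤ 0 for all K ⪰ 0. -/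
open Matrix
open scoped ComplexOrder MatrixOrder

/-! Writing `K = T * T` with `T = √K`, Sylvester's identity turns `det (1 + H K Hᴴ)` into
`det (1 + T (Hᴴ H) T)`, and conjugating by `T` preserves the Loewner order, so it suffices that
`det` is monotone on positive definite matrices. For `0 < A ≤ B` write
`B = √A (√A⁻¹ B √A⁻¹) √A`: the middle factor dominates `1`, so its eigenvalues, and hence its
determinant, are at least `1`. -/

namespace Matrix

variable {m n 𝕜 : Type*} [Fintype m] [Fintype n] [DecidableEq n] [RCLike 𝕜]

theorem det_one_add_mul_mul_self_mul {R : Type*} [CommRing R] [DecidableEq m]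
    (A : Matrix m n R) (T : Matrix n n R) (B : Matrix n m R) :
    det (1 + A * (T * T) * B) = det (1 + T * (B * A) * T) := by
  calc det (1 + A * (T * T) * B) = det (1 + A * (T * (T * B))) := by
        simp only [Matrix.mul_assoc]
    _ = det (1 + T * (T * B * A)) := by rw [det_one_add_mul_comm, Matrix.mul_assoc]
    _ = det (1 + T * (B * A) * T) := by
      rw [det_one_add_mul_comm]; simp only [Matrix.mul_assoc]

theorem one_le_det_of_one_le {M : Matrix n n 𝕜} (h : 1 ≤ M) : 1 ≤ M.det := by
  have hM : M.PosSemidef := nonneg_iff_posSemidef.mp (zero_le_one.trans h)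
  have heig (i : n) : 1 ≤ hM.1.eigenvalues i :=
    (CFC.one_le_iff M).mp h _ (hM.1.eigenvalues_mem_spectrum_real i)
  rw [hM.1.det_eq_prod_eigenvalues, ← RCLike.ofReal_prod, ← RCLike.ofReal_one,
    RCLike.ofReal_le_ofReal]
  exact Finset.one_le_prod fun i _ => heig i

theorem PosDef.det_le_det_of_le {A B : Matrix n n 𝕜} (hA : A.PosDef) (hAB : A ≤ B) :
    A.det ≤ B.det := by
  set S := CFC.sqrt A
  have hSS : S * S = A := CFC.sqrt_mul_sqrt_self A hA.posSemidef.nonneg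
  have hS : IsUnit S.det := (isUnit_iff_isUnit_det S).mp
    ((CFC.isUnit_sqrt_iff A hA.posSemidef.nonneg).mpr hA.isUnit)
  have hSinv : IsSelfAdjoint S⁻¹ := (CFC.sqrt_nonneg A).isSelfAdjoint.isHermitian.inv
  have hone : 1 ≤ S⁻¹ * B * S⁻¹ := by
    have := hSinv.conjugate_le_conjugate hAB
    simpa only [← hSS, Matrix.mul_assoc, nonsing_inv_mul_cancel_left _ _ hS,
      mul_nonsing_inv _ hS] using this
  have hB : B = S * (S⁻¹ * B * S⁻¹) * S := by
    simp only [Matrix.mul_assoc, nonsing_inv_mul _ hS, Matrix.mul_one,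
      mul_nonsing_inv_cancel_left _ _ hS]
  rw [hB, det_mul, det_mul, mul_right_comm, ← det_mul, hSS]
  exact le_mul_of_one_le_right hA.det_pos.le (one_le_det_of_one_le hone)

end Matrix

/-- If `H_rᴴ H_r ⪯ H_eᴴ H_e`, then for every `K ⪰ 0`,
`det(I + H_r K H_rᴴ) ≤ det(I + H_e K H_eᴴ)`; consequently
`log det(I + H_r K H_rᴴ) − log det(I + H_e K H_eᴴ) ≤ 0`. -/
theorem stmt_16 {nr ne nt : ℕ}
    (Hr : Matrix (Fin nr) (Fin nt) ℂ) (He : Matrix (Fin ne) (Fin nt) ℂ)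
    (h : (Heᴴ * He - Hrᴴ * Hr).PosSemidef) :
    ∀ K : Matrix (Fin nt) (Fin nt) ℂ, K.PosSemidef →
      ((1 : Matrix (Fin nr) (Fin nr) ℂ) + Hr * K * Hrᴴ).det.re
          ≤ ((1 : Matrix (Fin ne) (Fin ne) ℂ) + He * K * Heᴴ).det.re ∧
      Real.log (((1 : Matrix (Fin nr) (Fin nr) ℂ) + Hr * K * Hrᴴ).det.re)
          - Real.log (((1 : Matrix (Fin ne) (Fin ne) ℂ) + He * K * Heᴴ).det.re) ≤ 0 := by
  intro K hK
  set T := CFC.sqrt K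
  have hT : 0 ≤ T := CFC.sqrt_nonneg K
  have hTT : K = T * T := (CFC.sqrt_mul_sqrt_self K hK.nonneg).symm
  have hdet : ((1 : Matrix (Fin nr) (Fin nr) ℂ) + Hr * K * Hrᴴ).det
      ≤ ((1 : Matrix (Fin ne) (Fin ne) ℂ) + He * K * Heᴴ).det := by
    rw [hTT, det_one_add_mul_mul_self_mul, det_one_add_mul_mul_self_mul]
    refine PosDef.det_le_det_of_le (PosDef.one.add_posSemidef ?_) ?_
    · exact nonneg_iff_posSemidef.mp
        (conjugate_nonneg_of_nonneg (posSemidef_conjTranspose_mul_self Hr).nonneg hT)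
    · exact add_le_add_right (conjugate_le_conjugate_of_nonneg (le_iff.mpr h) hT) 1
  have hpos : 0 < ((1 : Matrix (Fin nr) (Fin nr) ℂ) + Hr * K * Hrᴴ).det :=
    (PosDef.one.add_posSemidef (hK.mul_mul_conjTranspose_same Hr)).det_pos
  have hre := (Complex.le_def.mp hdet).1
  exact ⟨hre, sub_nonpos.mpr (Real.log_le_log (Complex.lt_def.mp hpos).1 hre)⟩
end

section
/- Let K̄_Φ be positive semidefinite with decomposition K̄_Φ = W Ω̄ W† where W has orthonormal columns (W†W = I) and Ω̄ is positive definite, and let H_t be a matrix whose column space is contained in the column space of W, so H_t = W G for some G. If Ω̄⁻¹ − (G K̄ G† + Ω̄)⁻¹ = W† Υ W for some matrix Υ and positive semidefinite K̄, then H_t K̄ H_t† = K̄_Φ Υ (K̄_Φ + H_t K̄ H_t†). -/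
open Matrix
open scoped ComplexOrder

/-- Lifting the KKT condition from the reduced problem: if `K̄_Φ = W Ω̄ Wᴴ` with
`WᴴW = I` and `Ω̄ ≻ 0`, `H_t = W G`, `K̄ ⪰ 0`, and
`Ω̄⁻¹ − (G K̄ Gᴴ + Ω̄)⁻¹ = Wᴴ Υ W`, then
`H_t K̄ H_tᴴ = K̄_Φ Υ (K̄_Φ + H_t K̄ H_tᴴ)`. -/
theorem stmt_19 {n r nt : ℕ}
    (W : Matrix (Fin n) (Fin r) ℂ) (hW : Wᴴ * W = 1)
    (Ωbar : Matrix (Fin r) (Fin r) ℂ) (hΩ : Ωbar.PosDef)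
    (KΦ : Matrix (Fin n) (Fin n) ℂ) (hKΦ : KΦ.PosSemidef)
    (hKΦW : KΦ = W * Ωbar * Wᴴ)
    (G : Matrix (Fin r) (Fin nt) ℂ) (Ht : Matrix (Fin n) (Fin nt) ℂ)
    (hHt : Ht = W * G)
    (Kbar : Matrix (Fin nt) (Fin nt) ℂ) (hK : Kbar.PosSemidef)
    (Υ : Matrix (Fin n) (Fin n) ℂ)
    (hKKT : Ωbar⁻¹ - (G * Kbar * Gᴴ + Ωbar)⁻¹ = Wᴴ * Υ * W) :
    Ht * Kbar * Htᴴ = KΦ * Υ * (KΦ + Ht * Kbar * Htᴴ) := by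
  subst hKΦW hHt
  set S := G * Kbar * Gᴴ + Ωbar with hSdef
  have hS : S.PosDef := Matrix.PosDef.posSemidef_add (hK.mul_mul_conjTranspose_same G) hΩ
  have hSinv : S⁻¹ * S = 1 := nonsing_inv_mul _ ((isUnit_iff_isUnit_det _).1 hS.isUnit)
  have hΩinv : Ωbar * Ωbar⁻¹ = 1 := mul_nonsing_inv _ ((isUnit_iff_isUnit_det _).1 hΩ.isUnit)
  have key : Ωbar * (Wᴴ * Υ * W) * S = G * Kbar * Gᴴ := by
    rw [← hKKT, mul_sub, sub_mul, hΩinv, one_mul,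
      mul_assoc Ωbar S⁻¹ S, hSinv, mul_one, hSdef, add_sub_cancel_right]
  calc W * G * Kbar * (W * G)ᴴ
      = W * (G * Kbar * Gᴴ) * Wᴴ := by
        simp only [conjTranspose_mul, Matrix.mul_assoc]
    _ = W * (Ωbar * (Wᴴ * Υ * W) * S) * Wᴴ := by rw [key]
    _ = W * Ωbar * Wᴴ * Υ * (W * Ωbar * Wᴴ + W * G * Kbar * (W * G)ᴴ) := by
        rw [hSdef]
        simp only [conjTranspose_mul, Matrix.mul_assoc, Matrix.mul_add, Matrix.add_mul]
        rw [add_comm]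
end
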